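/- Let q ∈ (1,2] and p := q/(q−1). Then for all sufficiently small t > 0 the set S_t(x) of minimizers defining f_t(x) is nonempty, and lim_{t→0⁺} f_t(x)/t = −‖N‖^q / q and lim_{t→0⁺} L_t(x)/t = ‖N‖^{q/p}, where ‖N‖ := max{ N(ξ) : ξ ∈ ℝⁿ, |ξ| = 1 } (which equals the pointwise Lipschitz constant lip u(x)). -/

import Mathlib

/-!
Write `a = ‖N‖` and `σ = |x - y| / t`. Then `|x - y|^p / (p t^(p-1)) = t σ^p / p`, and metric
differentiability gives `d(u x, u y) ≤ (a + ε) |x - y|` near `x`, so the cost of `y` is at least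
`t (σ^p / p - (a + ε) σ) ≥ -t (a + ε)^q / q` by Young's inequality. Testing the point
`x + t a^(q-1) e`, where `N e = a` with `|e| = 1`, gives the matching upper bound
`t (-a^q / q + o(1))`. Since the cost also dominates `|x - y| - t (L + 1)^q / q`, all points of
nonpositive cost lie within distance `O(t)` of `x`: minimizers exist by compactness and the local
estimates apply to them. For a minimizer, `σ` is then an almost-minimizer of `σ^p / p - a σ`,
whose only minimizer is `a^(q-1)` (the equality case of Young's inequality), and a compactness
argument forces `σ → a^(q-1) = a^(q/p)`.
-/

open Metric Filter Set Topology Asymptotics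
open scoped NNReal

section YoungProfile

variable {p q a σ : ℝ}

noncomputable def youngProfile (p a σ : ℝ) : ℝ := σ ^ p / p - a * σ

theorem neg_rpow_div_le_youngProfile (hpq : p.HolderConjugate q) (ha : 0 ≤ a) (hσ : 0 ≤ σ) :
    -(a ^ q / q) ≤ youngProfile p a σ := by
  have := Real.young_inequality_of_nonneg hσ ha hpq
  rw [youngProfile]
  linarith

theorem youngProfile_eq_neg_rpow_div_iff (hpq : p.HolderConjugate q) (ha : 0 ≤ a)
    (hσ : 0 ≤ σ) : youngProfile p a σ = -(a ^ q / q) ↔ σ = a ^ (q - 1) := by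
  rw [← hpq.symm.div_conj_eq_sub_one, div_eq_mul_inv q p, Real.rpow_mul ha,
    Real.eq_rpow_inv hσ (Real.rpow_nonneg ha q) hpq.ne_zero,
    ← Real.young_inequality_eq_iff_of_nonneg hσ ha hpq, youngProfile]
  constructor <;> intro h <;> linarith

theorem youngProfile_rpow_sub_one (hpq : p.HolderConjugate q) (ha : 0 ≤ a) :
    youngProfile p a (a ^ (q - 1)) = -(a ^ q / q) :=
  (youngProfile_eq_neg_rpow_div_iff hpq ha (Real.rpow_nonneg ha _)).2 rfl

theorem neg_rpow_div_lt_youngProfile (hpq : p.HolderConjugate q) (ha : 0 ≤ a) (hσ : 0 ≤ σ)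
    (hne : σ ≠ a ^ (q - 1)) : -(a ^ q / q) < youngProfile p a σ :=
  (neg_rpow_div_le_youngProfile hpq ha hσ).lt_of_ne
    fun h => hne ((youngProfile_eq_neg_rpow_div_iff hpq ha hσ).1 h.symm)

theorem sub_rpow_div_le_youngProfile (hpq : p.HolderConjugate q) (ha : 0 ≤ a + 1)
    (hσ : 0 ≤ σ) : σ - (a + 1) ^ q / q ≤ youngProfile p a σ := by
  have := neg_rpow_div_le_youngProfile hpq ha hσ
  rw [youngProfile] at *
  linarith

theorem continuous_youngProfile (hp : 0 ≤ p) :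
    Continuous fun z : ℝ × ℝ => youngProfile p z.1 z.2 := by
  unfold youngProfile
  have := Real.continuous_rpow_const hp
  fun_prop

theorem eventually_abs_sub_lt_of_youngProfile_le (hpq : p.HolderConjugate q) (ha : 0 ≤ a)
    {δ : ℝ} (hδ : 0 < δ) :
    ∀ᶠ ε in 𝓝 0, ∀ σ, 0 ≤ σ → youngProfile p (a + ε) σ ≤ -(a ^ q / q) + ε →
      |σ - a ^ (q - 1)| < δ := by
  -- near-minimizers lie below `M` by coercivity; away from `a^(q-1)` the profile exceeds its
  -- minimum uniformly on the compact set `[0, M]`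
  set M := 1 + (a + 2) ^ q / q
  have hK : ∀ᶠ ε in 𝓝 0, ∀ σ ∈ Icc 0 M \ ball (a ^ (q - 1)) δ,
      -(a ^ q / q) + ε < youngProfile p (a + ε) σ := by
    refine (isCompact_Icc.diff isOpen_ball).eventually_forall_of_forall_eventually
      fun σ ⟨⟨hσ, _⟩, hσδ⟩ => ?_
    have hcont : Continuous fun z : ℝ × ℝ => youngProfile p (a + z.1) z.2 :=
      (continuous_youngProfile hpq.nonneg).comp (f := fun z : ℝ × ℝ => (a + z.1, z.2))
        (by fun_prop)
    refine ContinuousAt.eventually_lt (f := fun z : ℝ × ℝ => -(a ^ q / q) + z.1) (by fun_prop)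
      hcont.continuousAt ?_
    have hne : σ ≠ a ^ (q - 1) := fun h => hσδ (h ▸ mem_ball_self hδ)
    simpa using neg_rpow_div_lt_youngProfile hpq ha hσ hne
  filter_upwards [hK, Ioo_mem_nhds (neg_lt_zero.2 one_pos) one_pos]
    with ε hεK ⟨hε₁, hε₂⟩ σ hσ hle
  by_contra! hfar
  have hσM : σ ≤ M := by
    have h₁ := sub_rpow_div_le_youngProfile hpq (by linarith : 0 ≤ a + ε + 1) hσ
    have h₂ : (a + ε + 1) ^ q ≤ (a + 2) ^ q :=
      Real.rpow_le_rpow (by linarith) (by linarith) hpq.symm.nonneg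
    have h₃ : 0 ≤ a ^ q / q := div_nonneg (Real.rpow_nonneg ha q) hpq.symm.nonneg
    have h₄ := div_le_div_of_nonneg_right h₂ hpq.symm.nonneg
    linarith
  have hσK : σ ∈ Icc 0 M \ ball (a ^ (q - 1)) δ :=
    ⟨⟨hσ, hσM⟩, by simpa [Real.dist_eq] using hfar⟩
  linarith [hεK σ hσK]

end YoungProfile

theorem rpow_div_mul_rpow_sub_one {p s t : ℝ} (hs : 0 ≤ s) (ht : 0 < t) :
    s ^ p / (p * t ^ (p - 1)) = t * ((s / t) ^ p / p) := by
  rw [Real.div_rpow hs ht.le, Real.rpow_sub_one ht.ne']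
  field_simp

theorem csInf_mem_Icc_of_subset {α : Type*} [ConditionallyCompleteLattice α] {s : Set α}
    {a b : α} (hne : s.Nonempty) (hs : s ⊆ Icc a b) : sInf s ∈ Icc a b :=
  ⟨le_csInf hne fun _ hy => (hs hy).1,
    (csInf_le ⟨a, fun _ hy => (hs hy).1⟩ hne.some_mem).trans (hs hne.some_mem).2⟩

section HopfLax

variable {E Y : Type*} [NormedAddCommGroup E] [MetricSpace Y]
  {Ω : Set E} {u : E → Y} {L : ℝ≥0} {x y : E} {p q t : ℝ}

-- `hopfLaxValue u Ω x p t` is `f_t(x)` and `hopfLaxArgmin u Ω x p t` is `S_t(x)`.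
noncomputable def hopfLaxCost (u : E → Y) (x : E) (p t : ℝ) (y : E) : ℝ :=
  ‖x - y‖ ^ p / (p * t ^ (p - 1)) - dist (u x) (u y)

noncomputable def hopfLaxValue (u : E → Y) (Ω : Set E) (x : E) (p t : ℝ) : ℝ :=
  ⨅ y : Ω, hopfLaxCost u x p t y

def hopfLaxArgmin (u : E → Y) (Ω : Set E) (x : E) (p t : ℝ) : Set E :=
  {y ∈ Ω | hopfLaxValue u Ω x p t = hopfLaxCost u x p t y}

theorem hopfLaxCost_self (hp : p ≠ 0) : hopfLaxCost u x p t x = 0 := by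
  simp [hopfLaxCost, Real.zero_rpow hp]

theorem mul_youngProfile_le_hopfLaxCost {A : ℝ} (ht : 0 < t)
    (h : dist (u x) (u y) ≤ A * ‖x - y‖) :
    t * youngProfile p A (‖x - y‖ / t) ≤ hopfLaxCost u x p t y := by
  rw [hopfLaxCost, rpow_div_mul_rpow_sub_one (norm_nonneg _) ht, youngProfile, mul_sub,
    mul_left_comm, mul_div_cancel₀ _ ht.ne']
  linarith

theorem neg_mul_rpow_div_le_hopfLaxCost (hpq : p.HolderConjugate q) {A : ℝ} (hA : 0 ≤ A)
    (ht : 0 < t) (h : dist (u x) (u y) ≤ A * ‖x - y‖) :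
    -(t * (A ^ q / q)) ≤ hopfLaxCost u x p t y := by
  have h₁ := mul_le_mul_of_nonneg_left
    (neg_rpow_div_le_youngProfile hpq hA (div_nonneg (norm_nonneg (x - y)) ht.le)) ht.le
  linarith [mul_youngProfile_le_hopfLaxCost (p := p) ht h]

theorem norm_sub_sub_le_hopfLaxCost (hpq : p.HolderConjugate q) (hu : LipschitzOnWith L u Ω)
    (hx : x ∈ Ω) (hy : y ∈ Ω) (ht : 0 < t) :
    ‖x - y‖ - t * ((L + 1) ^ q / q) ≤ hopfLaxCost u x p t y := by
  have h : dist (u x) (u y) ≤ L * ‖x - y‖ := by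
    simpa [dist_eq_norm] using hu.dist_le_mul x hx y hy
  have h₁ := mul_le_mul_of_nonneg_left (sub_rpow_div_le_youngProfile (a := L) hpq
    (by positivity) (div_nonneg (norm_nonneg (x - y)) ht.le)) ht.le
  rw [mul_sub, mul_div_cancel₀ _ ht.ne'] at h₁
  linarith [mul_youngProfile_le_hopfLaxCost (p := p) ht h]

theorem hopfLaxValue_le_hopfLaxCost (hpq : p.HolderConjugate q)
    (hu : LipschitzOnWith L u Ω) (hx : x ∈ Ω) (ht : 0 < t) (hy : y ∈ Ω) :
    hopfLaxValue u Ω x p t ≤ hopfLaxCost u x p t y := by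
  refine ciInf_le ⟨-(t * ((L + 1) ^ q / q)), ?_⟩ (⟨y, hy⟩ : Ω)
  rintro _ ⟨⟨z, hz⟩, rfl⟩
  linarith [norm_sub_sub_le_hopfLaxCost (p := p) hpq hu hx hz ht, norm_nonneg (x - z)]


theorem exists_isMinOn_hopfLaxCost [ProperSpace E] (hpq : p.HolderConjugate q)
    (hu : LipschitzOnWith L u Ω) {r : ℝ} (hr : closedBall x r ⊆ Ω) (ht : 0 < t)
    (htr : t * ((L + 1) ^ q / q) ≤ r) :
    ∃ y₀ ∈ Ω, IsMinOn (hopfLaxCost u x p t) Ω y₀ := by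
  have hr₀ : 0 ≤ r := le_trans (by have := hpq.symm.pos; positivity) htr
  have hx : x ∈ Ω := hr (mem_closedBall_self hr₀)
  have hcont : ContinuousOn (hopfLaxCost u x p t) (closedBall x r) := by
    have := Real.continuous_rpow_const hpq.nonneg
    exact ContinuousOn.sub (by fun_prop)
      (continuous_dist.comp_continuousOn (continuousOn_const.prodMk (hu.continuousOn.mono hr)))
  obtain ⟨y₀, hy₀, hmin⟩ := (isCompact_closedBall x r).exists_isMinOn
    ⟨x, mem_closedBall_self hr₀⟩ hcont
  refine ⟨y₀, hr hy₀, fun y hy => ?_⟩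
  by_cases hyr : y ∈ closedBall x r
  · exact hmin hyr
  have hfar : r < ‖x - y‖ := by simpa [dist_eq_norm'] using hyr
  have hcost := norm_sub_sub_le_hopfLaxCost (p := p) hpq hu hx hy ht
  have hx₀ : hopfLaxCost u x p t y₀ ≤ hopfLaxCost u x p t x :=
    hmin (mem_closedBall_self hr₀)
  rw [hopfLaxCost_self hpq.ne_zero] at hx₀
  exact hx₀.trans (by linarith)

theorem eventually_forall_of_hopfLaxCost_nonpos (hpq : p.HolderConjugate q)
    (hu : LipschitzOnWith L u Ω) (hx : x ∈ Ω) {P : E → Prop} (hP : ∀ᶠ y in 𝓝 x, P y) :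
    ∀ᶠ t in 𝓝[>] 0, ∀ y ∈ Ω, hopfLaxCost u x p t y ≤ 0 → P y := by
  obtain ⟨δ, hδ, hδP⟩ := Metric.eventually_nhds_iff.1 hP
  have hC : 0 < ((L : ℝ) + 1) ^ q / q := by have := hpq.symm.pos; positivity
  filter_upwards [Ioo_mem_nhdsGT (div_pos hδ hC)] with t ⟨ht, htδ⟩ y hy hcost
  have h := norm_sub_sub_le_hopfLaxCost (p := p) hpq hu hx hy ht
  refine hδP ?_
  rw [dist_eq_norm']
  have := (lt_div_iff₀ hC).1 htδ
  linarith

theorem eventually_forall_mem_hopfLaxArgmin (hpq : p.HolderConjugate q)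
    (hu : LipschitzOnWith L u Ω) (hx : x ∈ Ω) {P : E → Prop} (hP : ∀ᶠ y in 𝓝 x, P y) :
    ∀ᶠ t in 𝓝[>] 0, ∀ y ∈ hopfLaxArgmin u Ω x p t, P y := by
  filter_upwards [eventually_forall_of_hopfLaxCost_nonpos hpq hu hx hP, self_mem_nhdsWithin]
    with t hPt ht y ⟨hy, hyV⟩
  refine hPt y hy (hyV ▸ ?_)
  simpa [hopfLaxCost_self hpq.ne_zero] using hopfLaxValue_le_hopfLaxCost hpq hu hx ht hx

theorem eventually_hopfLaxArgmin_nonempty [ProperSpace E]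
    (hpq : p.HolderConjugate q) (hΩ : IsOpen Ω) (hx : x ∈ Ω) (hu : LipschitzOnWith L u Ω) :
    ∀ᶠ t in 𝓝[>] 0, (hopfLaxArgmin u Ω x p t).Nonempty := by
  obtain ⟨r, hr, hrΩ⟩ := Metric.isOpen_iff.1 hΩ x hx
  have hC : 0 < ((L : ℝ) + 1) ^ q / q := by have := hpq.symm.pos; positivity
  filter_upwards [Ioo_mem_nhdsGT (div_pos (half_pos hr) hC)] with t ⟨ht, htr⟩
  obtain ⟨y₀, hy₀, hmin⟩ := exists_isMinOn_hopfLaxCost (p := p) hpq hu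
    ((closedBall_subset_ball (half_lt_self hr)).trans hrΩ) ht ((lt_div_iff₀ hC).1 htr).le
  exact ⟨y₀, hy₀, hmin.iInf_eq hy₀⟩

end HopfLax

section MetricDifferential

variable {E Y : Type*} [NormedAddCommGroup E] [NormedSpace ℝ E] [MetricSpace Y]
  {u : E → Y} {x : E} {N : Seminorm ℝ E} {a : ℝ}

theorem Seminorm.le_mul_norm_of_isGreatest
    (hN : IsGreatest ((fun ξ => N ξ) '' {ξ | ‖ξ‖ = 1}) a) (ξ : E) :
    N ξ ≤ a * ‖ξ‖ := by
  rcases eq_or_ne ξ 0 with rfl | hξ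
  · simp
  have hξ' := norm_pos_iff.2 hξ
  have h : N (‖ξ‖⁻¹ • ξ) ≤ a :=
    hN.2 ⟨‖ξ‖⁻¹ • ξ, by simp [norm_smul, hξ'.ne'], rfl⟩
  rw [map_smul_eq_mul, norm_inv, norm_norm, inv_mul_le_iff₀ hξ'] at h
  linarith

theorem Seminorm.nonneg_of_isGreatest
    (hN : IsGreatest ((fun ξ => N ξ) '' {ξ | ‖ξ‖ = 1}) a) : 0 ≤ a := by
  obtain ⟨e, -, rfl⟩ := hN.1
  exact apply_nonneg N e

theorem tendsto_add_smul_nhdsGT_zero (x v : E) :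
    Tendsto (fun t : ℝ => x + t • v) (𝓝[>] 0) (𝓝 x) :=
  tendsto_nhdsWithin_of_tendsto_nhds (Continuous.tendsto' (by fun_prop) 0 x (by simp))

theorem eventually_dist_le_of_isLittleO
    (hdiff : (fun y => dist (u y) (u x) - N (y - x)) =o[𝓝 x] fun y => ‖y - x‖)
    (hN : ∀ ξ, N ξ ≤ a * ‖ξ‖) {ε : ℝ} (hε : 0 < ε) :
    ∀ᶠ y in 𝓝 x, dist (u x) (u y) ≤ (a + ε) * ‖x - y‖ := by
  filter_upwards [hdiff.bound hε] with y hy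
  rw [Real.norm_eq_abs, norm_norm] at hy
  rw [dist_comm, norm_sub_rev x y]
  linarith [(abs_le.1 hy).2, hN (y - x)]

theorem tendsto_dist_add_smul_div
    (hdiff : (fun y => dist (u y) (u x) - N (y - x)) =o[𝓝 x] fun y => ‖y - x‖) (v : E) :
    Tendsto (fun t : ℝ => dist (u (x + t • v)) (u x) / t) (𝓝[>] 0) (𝓝 (N v)) := by
  have hO : (fun t : ℝ => ‖x + t • v - x‖) =O[𝓝[>] 0] fun t => t :=
    IsBigO.of_bound ‖v‖ (by simp [norm_smul, mul_comm])
  have h := ((hdiff.comp_tendsto (tendsto_add_smul_nhdsGT_zero x v)).trans_isBigO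
    hO).tendsto_div_nhds_zero
  rw [← zero_add (N v)]
  refine (h.add_const (N v)).congr' ?_
  filter_upwards [self_mem_nhdsWithin] with t (ht : 0 < t)
  simp only [Function.comp_def, add_sub_cancel_left, map_smul_eq_mul, Real.norm_of_nonneg ht.le]
  field_simp
  ring

theorem tendsto_hopfLaxCost_add_smul_div {p : ℝ}
    (hdiff : (fun y => dist (u y) (u x) - N (y - x)) =o[𝓝 x] fun y => ‖y - x‖) (v : E) :
    Tendsto (fun t => hopfLaxCost u x p t (x + t • v) / t) (𝓝[>] 0)
      (𝓝 (‖v‖ ^ p / p - N v)) := by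
  refine (tendsto_const_nhds.sub (tendsto_dist_add_smul_div hdiff v)).congr' ?_
  filter_upwards [self_mem_nhdsWithin] with t (ht : 0 < t)
  have hnorm : ‖x - (x + t • v)‖ = t * ‖v‖ := by
    rw [sub_add_cancel_left, norm_neg, norm_smul, Real.norm_of_nonneg ht.le]
  rw [hopfLaxCost, hnorm, rpow_div_mul_rpow_sub_one (by positivity) ht,
    mul_div_cancel_left₀ _ ht.ne', dist_comm, sub_div, mul_div_cancel_left₀ _ ht.ne']

end MetricDifferential

section Asymptotics

variable {E Y : Type*} [NormedAddCommGroup E] [NormedSpace ℝ E] [MetricSpace Y]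
  {Ω : Set E} {u : E → Y} {x : E} {N : Seminorm ℝ E} {p q a : ℝ}

theorem eventually_neg_rpow_div_le_hopfLaxValue_div [ProperSpace E] (hpq : p.HolderConjugate q)
    (hΩ : IsOpen Ω) (hx : x ∈ Ω) (hu : LipschitzOnWith L u Ω)
    (hdiff : (fun y => dist (u y) (u x) - N (y - x)) =o[𝓝 x] fun y => ‖y - x‖)
    (hN : IsGreatest ((fun ξ => N ξ) '' {ξ | ‖ξ‖ = 1}) a) {ε : ℝ} (hε : 0 < ε) :
    ∀ᶠ t in 𝓝[>] 0, -((a + ε) ^ q / q) ≤ hopfLaxValue u Ω x p t / t := by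
  filter_upwards [eventually_hopfLaxArgmin_nonempty hpq hΩ hx hu,
    eventually_forall_mem_hopfLaxArgmin hpq hu hx
      (eventually_dist_le_of_isLittleO hdiff (Seminorm.le_mul_norm_of_isGreatest hN) hε),
    self_mem_nhdsWithin] with t ⟨y, hy⟩ hdist (ht : 0 < t)
  rw [le_div_iff₀ ht, hy.2]
  linarith [neg_mul_rpow_div_le_hopfLaxCost (p := p) hpq
    (by linarith [Seminorm.nonneg_of_isGreatest hN]) ht (hdist y hy)]

theorem eventually_hopfLaxValue_div_lt (hpq : p.HolderConjugate q)
    (hΩ : IsOpen Ω) (hx : x ∈ Ω) (hu : LipschitzOnWith L u Ω)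
    (hdiff : (fun y => dist (u y) (u x) - N (y - x)) =o[𝓝 x] fun y => ‖y - x‖)
    (hN : IsGreatest ((fun ξ => N ξ) '' {ξ | ‖ξ‖ = 1}) a) {b : ℝ}
    (hb : -(a ^ q / q) < b) :
    ∀ᶠ t in 𝓝[>] 0, hopfLaxValue u Ω x p t / t < b := by
  obtain ⟨e, he, rfl⟩ := hN.1
  set v := (N e ^ (q - 1)) • e
  have hlim : ‖v‖ ^ p / p - N v = -(N e ^ q / q) := by
    have hσ : 0 ≤ N e ^ (q - 1) := Real.rpow_nonneg (apply_nonneg N e) _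
    rw [← youngProfile_rpow_sub_one hpq (apply_nonneg N e), youngProfile, map_smul_eq_mul,
      norm_smul, Real.norm_of_nonneg hσ, show ‖e‖ = 1 from he, mul_one, mul_comm]
  filter_upwards [(tendsto_hopfLaxCost_add_smul_div hdiff v).eventually_lt_const (hlim ▸ hb),
    (tendsto_add_smul_nhdsGT_zero x v).eventually (hΩ.mem_nhds hx), self_mem_nhdsWithin]
    with t hlt hmem (ht : 0 < t)
  exact (div_le_div_of_nonneg_right (hopfLaxValue_le_hopfLaxCost hpq hu hx ht hmem)
    ht.le).trans_lt hlt

theorem tendsto_hopfLaxValue_div [ProperSpace E] (hpq : p.HolderConjugate q)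
    (hΩ : IsOpen Ω) (hx : x ∈ Ω) (hu : LipschitzOnWith L u Ω)
    (hdiff : (fun y => dist (u y) (u x) - N (y - x)) =o[𝓝 x] fun y => ‖y - x‖)
    (hN : IsGreatest ((fun ξ => N ξ) '' {ξ | ‖ξ‖ = 1}) a) :
    Tendsto (fun t => hopfLaxValue u Ω x p t / t) (𝓝[>] 0) (𝓝 (-(a ^ q / q))) := by
  refine tendsto_order.2 ⟨fun b hb => ?_, fun b hb =>
    eventually_hopfLaxValue_div_lt hpq hΩ hx hu hdiff hN hb⟩
  have := Real.continuous_rpow_const hpq.symm.nonneg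
  have hcont : Tendsto (fun ε => -((a + ε) ^ q / q)) (𝓝[>] 0) (𝓝 (-(a ^ q / q))) :=
    (Continuous.tendsto' (by fun_prop) 0 _ (by simp)).mono_left nhdsWithin_le_nhds
  obtain ⟨ε, hbε, hε⟩ := ((hcont.eventually_const_lt hb).and self_mem_nhdsWithin).exists
  filter_upwards [eventually_neg_rpow_div_le_hopfLaxValue_div hpq hΩ hx hu hdiff hN hε]
    with t ht using hbε.trans_le ht

theorem tendsto_sInf_norm_sub_hopfLaxArgmin_div [ProperSpace E] (hpq : p.HolderConjugate q)
    (hΩ : IsOpen Ω) (hx : x ∈ Ω) (hu : LipschitzOnWith L u Ω)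
    (hdiff : (fun y => dist (u y) (u x) - N (y - x)) =o[𝓝 x] fun y => ‖y - x‖)
    (hN : IsGreatest ((fun ξ => N ξ) '' {ξ | ‖ξ‖ = 1}) a) :
    Tendsto (fun t => sInf ((fun y => ‖x - y‖) '' hopfLaxArgmin u Ω x p t) / t) (𝓝[>] 0)
      (𝓝 (a ^ (q - 1))) := by
  refine Metric.tendsto_nhds.2 fun δ hδ => ?_
  obtain ⟨ε, hclose, hε⟩ := (((eventually_abs_sub_lt_of_youngProfile_le hpq
    (Seminorm.nonneg_of_isGreatest hN) (half_pos hδ)).filter_mono nhdsWithin_le_nhds).and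
    (self_mem_nhdsWithin : Ioi (0 : ℝ) ∈ 𝓝[>] 0)).exists
  filter_upwards [eventually_hopfLaxArgmin_nonempty hpq hΩ hx hu,
    eventually_forall_mem_hopfLaxArgmin hpq hu hx
      (eventually_dist_le_of_isLittleO hdiff (Seminorm.le_mul_norm_of_isGreatest hN) hε),
    eventually_hopfLaxValue_div_lt hpq hΩ hx hu hdiff hN (lt_add_of_pos_right _ hε),
    self_mem_nhdsWithin] with t hne hdist hV (ht : 0 < t)
  have hS : (fun y => ‖x - y‖) '' hopfLaxArgmin u Ω x p t ⊆
      Icc (t * (a ^ (q - 1) - δ / 2)) (t * (a ^ (q - 1) + δ / 2)) := by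
    rintro _ ⟨y, hy, rfl⟩
    have hσ : youngProfile p (a + ε) (‖x - y‖ / t) ≤ -(a ^ q / q) + ε := by
      have h := mul_youngProfile_le_hopfLaxCost (p := p) ht (hdist y hy)
      rw [← hy.2] at h
      rw [div_lt_iff₀ ht] at hV
      exact le_of_mul_le_mul_left (by linarith) ht
    obtain ⟨h₁, h₂⟩ := abs_lt.1 (hclose _ (by positivity) hσ)
    exact ⟨(le_div_iff₀' ht).1 (by linarith), (div_le_iff₀' ht).1 (by linarith)⟩
  obtain ⟨h₁, h₂⟩ := csInf_mem_Icc_of_subset (hne.image _) hS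
  rw [Real.dist_eq, abs_lt]
  constructor
  · linarith [(le_div_iff₀' ht).2 h₁]
  · linarith [(div_le_iff₀' ht).2 h₂]

end Asymptotics

theorem stmt11_general (n : ℕ) {Y : Type*} [MetricSpace Y]
    (Ω : Set (EuclideanSpace ℝ (Fin n))) (hΩopen : IsOpen Ω)
    (u : EuclideanSpace ℝ (Fin n) → Y) (L : NNReal)
    (hu : LipschitzOnWith L u Ω)
    (x : EuclideanSpace ℝ (Fin n)) (hx : x ∈ Ω)
    (N : Seminorm ℝ (EuclideanSpace ℝ (Fin n)))
    (hdiff : (fun y => dist (u y) (u x) - N (y - x)) =o[𝓝[Ω] x] fun y => ‖y - x‖)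
    (q p : ℝ) (hq : q ∈ Ioc (1 : ℝ) 2) (hp : p = q / (q - 1))
    (f : ℝ → ℝ)
    (hf : ∀ t, f t = ⨅ y : Ω,
      (‖x - (y : EuclideanSpace ℝ (Fin n))‖ ^ p / (p * t ^ (p - 1))
        - dist (u x) (u (y : EuclideanSpace ℝ (Fin n)))))
    (S : ℝ → Set (EuclideanSpace ℝ (Fin n)))
    (hS : ∀ t, S t = {y ∈ Ω | f t = ‖x - y‖ ^ p / (p * t ^ (p - 1)) - dist (u x) (u y)})
    (Lt : ℝ → ℝ) (hLt : ∀ t, Lt t = sInf ((fun y => ‖x - y‖) '' S t))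
    (Nnorm : ℝ) (hN : IsGreatest ((fun ξ => N ξ) '' {ξ | ‖ξ‖ = 1}) Nnorm) :
    (∀ᶠ t in 𝓝[>] (0 : ℝ), (S t).Nonempty) ∧
    Filter.Tendsto (fun t => f t / t) (𝓝[>] (0 : ℝ)) (𝓝 (-(Nnorm ^ q / q))) ∧
    Filter.Tendsto (fun t => Lt t / t) (𝓝[>] (0 : ℝ)) (𝓝 (Nnorm ^ (q / p))) := by
  have hpq : p.HolderConjugate q :=
    ((Real.holderConjugate_iff_eq_conjExponent hq.1).2 hp).symm
  rw [nhdsWithin_eq_nhds.2 (hΩopen.mem_nhds hx)] at hdiff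
  obtain rfl : f = hopfLaxValue u Ω x p := funext hf
  obtain rfl : S = hopfLaxArgmin u Ω x p := funext hS
  obtain rfl : Lt = fun t => sInf ((fun y => ‖x - y‖) '' hopfLaxArgmin u Ω x p t) := funext hLt
  rw [hpq.symm.div_conj_eq_sub_one]
  exact ⟨eventually_hopfLaxArgmin_nonempty hpq hΩopen hx hu,
    tendsto_hopfLaxValue_div hpq hΩopen hx hu hdiff hN,
    tendsto_sInf_norm_sub_hopfLaxArgmin_div hpq hΩopen hx hu hdiff hN⟩

theorem stmt11 (n : ℕ) (hn : 1 ≤ n) {Y : Type*} [MetricSpace Y]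
    (Ω : Set (EuclideanSpace ℝ (Fin n))) (hΩopen : IsOpen Ω)
    (u : EuclideanSpace ℝ (Fin n) → Y) (L : NNReal) (hL : 0 < L)
    (hu : LipschitzOnWith L u Ω)
    (x : EuclideanSpace ℝ (Fin n)) (hx : x ∈ Ω)
    (N : Seminorm ℝ (EuclideanSpace ℝ (Fin n)))
    (hdiff : (fun y => dist (u y) (u x) - N (y - x)) =o[𝓝[Ω] x] fun y => ‖y - x‖)
    (q p : ℝ) (hq : q ∈ Ioc (1 : ℝ) 2) (hp : p = q / (q - 1))
    (f : ℝ → ℝ)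
    (hf : ∀ t, f t = ⨅ y : Ω,
      (‖x - (y : EuclideanSpace ℝ (Fin n))‖ ^ p / (p * t ^ (p - 1))
        - dist (u x) (u (y : EuclideanSpace ℝ (Fin n)))))
    (S : ℝ → Set (EuclideanSpace ℝ (Fin n)))
    (hS : ∀ t, S t = {y ∈ Ω | f t = ‖x - y‖ ^ p / (p * t ^ (p - 1)) - dist (u x) (u y)})
    (Lt : ℝ → ℝ) (hLt : ∀ t, Lt t = sInf ((fun y => ‖x - y‖) '' S t))
    (Nnorm : ℝ) (hN : IsGreatest ((fun ξ => N ξ) '' {ξ | ‖ξ‖ = 1}) Nnorm) :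
    (∀ᶠ t in 𝓝[>] (0 : ℝ), (S t).Nonempty) ∧
    Filter.Tendsto (fun t => f t / t) (𝓝[>] (0 : ℝ)) (𝓝 (-(Nnorm ^ q / q))) ∧
    Filter.Tendsto (fun t => Lt t / t) (𝓝[>] (0 : ℝ)) (𝓝 (Nnorm ^ (q / p))) :=
  stmt11_general n Ω hΩopen u L hu x hx N hdiff q p hq hp f hf S hS Lt hLt Nnorm hN
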